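/- Proposition 4.3 (continuity of the labeling). Fix a real number σ > 1 and a natural number m with 0 ≤ m ≤ (σ−1)/2. Let H be a complex Hilbert space with a Hilbert basis (ψ_k)_{k∈ℕ}, and for z ∈ D let |z,σ,m⟩ = 𝒩_{σ,m}(z)^{−1/2} · ∑_{k=0}^∞ Φ_k^{σ,m}(z) ψ_k ∈ H, where 𝒩_{σ,m}(z) = (σ−2m−1)/(π(1−|z|²)^σ). Then the map z ↦ |z,σ,m⟩ is continuous from D (with the subspace topology of ℂ) to H (with the norm topology); equivalently, for all z, w ∈ D, the norm ‖ |z,σ,m⟩ − |w,σ,m⟩ ‖_H tends to 0 as z → w. -/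

import Mathlib

open MeasureTheory

/-- Rising factorial (Pochhammer symbol) `(a)_j = ∏_{i=0}^{j-1} (a + i)`. -/
noncomputable def risingFactorial (a : ℝ) (j : ℕ) : ℝ :=
  ∏ i ∈ Finset.range j, (a + i)

/-- Jacobi polynomial `P_n^{(a,b)}(x)`. -/
noncomputable def jacobiP (n : ℕ) (a b x : ℝ) : ℝ :=
  (1 / (n.factorial : ℝ)) *
    ∑ s ∈ Finset.range (n + 1),
      (n.choose s : ℝ) * risingFactorial (a + s + 1) (n - s) *
        risingFactorial ((n : ℝ) + a + b + 1) s * ((x - 1) / 2) ^ s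

/-- The basis functions `Φ_k^{σ,m}(z)` of the generalized Bergman space. -/
noncomputable def Phi (σ : ℝ) (m k : ℕ) (z : ℂ) : ℂ :=
  (Real.sqrt ((σ - 2 * m - 1) * k.factorial * Real.Gamma (σ - m) /
      (Real.pi * m.factorial * Real.Gamma (σ - 2 * m + k))) : ℂ) *
    (-1) ^ k *
    ((((1 - ‖z‖ ^ 2) ^ (-(m : ℤ)) : ℝ)) : ℂ) *
    (starRingEnd ℂ z) ^ ((m : ℤ) - (k : ℤ)) *
    ((jacobiP k ((m : ℝ) - (k : ℝ)) (σ - 2 * m - 1) (1 - 2 * ‖z‖ ^ 2) : ℝ) : ℂ)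

/-- The normalization factor `𝒩_{σ,m}(z) = (σ−2m−1)/(π(1−|z|²)^σ)`. -/
noncomputable def normFactor (σ : ℝ) (m : ℕ) (z : ℂ) : ℝ :=
  (σ - 2 * m - 1) / (Real.pi * (1 - ‖z‖ ^ 2) ^ σ)

/-- The generalized negative binomial state
`|z,σ,m⟩ = 𝒩_{σ,m}(z)^{−1/2} ∑_{k} Φ_k^{σ,m}(z) ψ_k`. -/
noncomputable def gnbs {H : Type*} [NormedAddCommGroup H] [InnerProductSpace ℂ H]
    (ψ : HilbertBasis ℕ ℂ H) (σ : ℝ) (m : ℕ) (z : ℂ) : H :=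
  (Real.sqrt (normFactor σ m z))⁻¹ • ∑' k : ℕ, Phi σ m k z • (ψ k : H)

/-!
On a closed disc `|z| ≤ r < 1` every `Φ_k` is `(1-|z|²)^{-m}` times a polynomial in `z, z̄`:
expanding the Jacobi polynomial, only the monomials `z^s z̄^{m+s-k}` with `k - m ≤ s ≤ k` survive,
with coefficients `binom(m, k-s) (σ-m)_s / s! ≤ 2^m binom(s+N, N)` once `σ - m ≤ N + 1`. The
prefactor of `Φ_k` decreases in `k` because `k! Γ(x) ≤ Γ(x+k)` for `x ≥ 1`. Summing over `s` by
the hockey-stick identity gives `|Φ_k(z)| ≤ C_r binom(k+N+1, N+1) r^k`, a negative binomial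
series, so the Weierstrass M-test makes `z ↦ ∑ Φ_k(z) ψ_k` continuous on the open disc. Finally
`𝒩^{-1/2} = √(π (1-|z|²)^σ / (σ-2m-1))` is continuous.
-/

open Finset Nat ComplexConjugate

theorem risingFactorial_eq_eval_ascPochhammer (a : ℝ) (j : ℕ) :
    risingFactorial a j = (ascPochhammer ℝ j).eval a := by
  induction j with
  | zero => simp [risingFactorial]
  | succ j ih => rw [ascPochhammer_succ_eval, ← ih, risingFactorial, prod_range_succ]; rfl

theorem risingFactorial_natCast (n j : ℕ) : risingFactorial n j = n.ascFactorial j := by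
  rw [risingFactorial_eq_eval_ascPochhammer, cast_ascFactorial]

theorem risingFactorial_sub_add_one (n j : ℕ) :
    risingFactorial ((n : ℝ) - j + 1) j = n.descFactorial j := by
  rw [risingFactorial_eq_eval_ascPochhammer, ← descPochhammer_eval_eq_ascPochhammer,
    descPochhammer_eval_eq_descFactorial]

theorem risingFactorial_nonneg {a : ℝ} (ha : 0 ≤ a) (j : ℕ) : 0 ≤ risingFactorial a j :=
  prod_nonneg fun _ _ => by positivity

theorem risingFactorial_le_risingFactorial {a b : ℝ} (ha : 0 ≤ a) (hab : a ≤ b) (j : ℕ) :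
    risingFactorial a j ≤ risingFactorial b j :=
  prod_le_prod (fun _ _ => by positivity) fun _ _ => by linarith

theorem risingFactorial_div_factorial_le_choose {a : ℝ} (ha : 0 ≤ a) {N : ℕ}
    (haN : a ≤ N + 1) (s : ℕ) : risingFactorial a s / s ! ≤ (s + N).choose N := by
  have h := risingFactorial_le_risingFactorial ha haN s
  rw [← Nat.cast_add_one, risingFactorial_natCast, ascFactorial_eq_factorial_mul_choose,
    Nat.add_comm N s, choose_symm_add] at h
  rw [div_le_iff₀ (by positivity)]
  push_cast at h
  linarith

theorem factorial_mul_Gamma_le_Gamma_add_nat {x : ℝ} (hx : 1 ≤ x) (k : ℕ) :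
    k ! * Real.Gamma x ≤ Real.Gamma (x + k) := by
  induction k with
  | zero => simp
  | succ k ih =>
    rw [Nat.cast_add_one, ← add_assoc, Real.Gamma_add_one (by positivity), factorial_succ,
      Nat.cast_mul, Nat.cast_add_one, mul_assoc]
    exact mul_le_mul (by linarith) ih (by positivity) (by positivity)

/-- The factor `binom(k,s) (m-k+s+1)_{k-s} / k!` of `jacobiP` collapses to `binom(m, k-s) / s!`
because `(m-k+s+1)_{k-s}` is the descending factorial `m (m-1) ⋯ (m-k+s+1)`. -/
noncomputable def jacobiCoeff (σ : ℝ) (m k s : ℕ) : ℝ :=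
  m.choose (k - s) * (risingFactorial (σ - m) s / s !)

theorem jacobiP_eq_sum_jacobiCoeff (σ : ℝ) (m k : ℕ) (t : ℝ) :
    jacobiP k ((m : ℝ) - k) (σ - 2 * m - 1) (1 - 2 * t) =
      ∑ s ∈ range (k + 1), jacobiCoeff σ m k s * (-t) ^ s := by
  rw [jacobiP, mul_sum]
  refine sum_congr rfl fun s hs => ?_
  have hsk : s ≤ k := mem_range_succ_iff.mp hs
  have hdesc : risingFactorial ((m : ℝ) - k + s + 1) (k - s) = (k - s)! * m.choose (k - s) := by
    rw [show (m : ℝ) - k + s + 1 = m - ((k - s : ℕ) : ℝ) + 1 by push_cast [Nat.cast_sub hsk]; ring,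
      risingFactorial_sub_add_one, descFactorial_eq_factorial_mul_choose, Nat.cast_mul]
  have hfact : (k.choose s : ℝ) * s ! * (k - s)! = k ! := by
    exact_mod_cast choose_mul_factorial_mul_factorial hsk
  rw [jacobiCoeff, hdesc, show (k : ℝ) + (m - k) + (σ - 2 * m - 1) + 1 = σ - m by ring,
    show (1 - 2 * t - 1) / 2 = -t by ring]
  field_simp
  rw [← hfact]
  ring

theorem conj_zpow_mul_neg_norm_sq_pow (z : ℂ) {m k s : ℕ} (h : k ≤ m + s) :
    conj z ^ ((m : ℤ) - k) * (-(‖z‖ : ℂ) ^ 2) ^ s = (-1) ^ s * z ^ s * conj z ^ (m + s - k) := by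
  rcases eq_or_ne z 0 with rfl | hz
  · rcases s.eq_zero_or_pos with rfl | hs
    · simp [show (m : ℤ) - k = (m - k : ℕ) by omega]
    · simp [zero_pow hs.ne']
  · have hexp : (m : ℤ) - k = (m + s - k : ℕ) - (s : ℤ) := by omega
    have hz' : conj z ≠ 0 := by simpa
    rw [← Complex.mul_conj', hexp, zpow_sub₀ hz', zpow_natCast, zpow_natCast]
    field_simp
    ring

/-- The terms with `s < k - m` have vanishing coefficient, so the integer power `z̄^{m-k}` in
`Phi` (with its convention `0^{-n} = 0`) is absorbed into honest monomials `z^s z̄^{m+s-k}`: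
this is what makes `Φ_k` continuous at `0`. -/
noncomputable def phiPoly (σ : ℝ) (m k : ℕ) (z : ℂ) : ℂ :=
  ∑ s ∈ range (k + 1), (jacobiCoeff σ m k s : ℂ) * (-1) ^ s * z ^ s * conj z ^ (m + s - k)

noncomputable def phiConst (σ : ℝ) (m k : ℕ) : ℝ :=
  √((σ - 2 * m - 1) * k ! * Real.Gamma (σ - m) / (Real.pi * m ! * Real.Gamma (σ - 2 * m + k)))

theorem Phi_eq (σ : ℝ) (m k : ℕ) (z : ℂ) :
    Phi σ m k z =
      phiConst σ m k * (-1) ^ k * ((1 - ‖z‖ ^ 2) ^ (-(m : ℤ)) : ℝ) * phiPoly σ m k z := by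
  rw [Phi, mul_assoc, jacobiP_eq_sum_jacobiCoeff, phiConst, phiPoly]
  push_cast
  rw [mul_sum]
  congr 1
  refine sum_congr rfl fun s _ => ?_
  rcases le_or_gt k (m + s) with h | h
  · linear_combination (jacobiCoeff σ m k s : ℂ) * conj_zpow_mul_neg_norm_sq_pow z h
  · simp [jacobiCoeff, choose_eq_zero_of_lt (show m < k - s by omega)]

theorem jacobiCoeff_nonneg {σ : ℝ} {m : ℕ} (hσ : (m : ℝ) ≤ σ) (k s : ℕ) :
    0 ≤ jacobiCoeff σ m k s :=
  mul_nonneg (by positivity) (div_nonneg (risingFactorial_nonneg (by linarith) s) (by positivity))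

theorem jacobiCoeff_le {σ : ℝ} {m N : ℕ} (hσ : (m : ℝ) ≤ σ) (hN : σ - m ≤ N + 1) (k s : ℕ) :
    jacobiCoeff σ m k s ≤ 2 ^ m * (s + N).choose N :=
  mul_le_mul (by exact_mod_cast choose_le_two_pow m (k - s))
    (risingFactorial_div_factorial_le_choose (by linarith) hN s)
    (div_nonneg (risingFactorial_nonneg (by linarith) s) (by positivity)) (by positivity)

theorem pow_le_pow_div_pow_of_le_one {r : ℝ} (hr0 : 0 < r) (hr1 : r ≤ 1) {e m k : ℕ}
    (h : k ≤ e + m) : r ^ e ≤ r ^ k / r ^ m := by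
  rw [le_div_iff₀ (by positivity), ← pow_add]
  exact pow_le_pow_of_le_one hr0.le hr1 h

theorem norm_phiPoly_le {σ : ℝ} {m N : ℕ} (hσ : (m : ℝ) ≤ σ) (hN : σ - m ≤ N + 1) (k : ℕ)
    {r : ℝ} (hr0 : 0 < r) (hr1 : r ≤ 1) {z : ℂ} (hz : ‖z‖ ≤ r) :
    ‖phiPoly σ m k z‖ ≤ 2 ^ m * (k + (N + 1)).choose (N + 1) * (r ^ k / r ^ m) := by
  have hterm : ∀ s ∈ range (k + 1),
      ‖(jacobiCoeff σ m k s : ℂ) * (-1) ^ s * z ^ s * conj z ^ (m + s - k)‖ ≤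
        2 ^ m * (s + N).choose N * (r ^ k / r ^ m) := by
    intro s _
    rcases le_or_gt k (m + s) with h | h
    · simp only [norm_mul, norm_pow, Complex.norm_real, Complex.norm_conj, norm_neg, norm_one,
        one_pow, mul_one, Real.norm_of_nonneg (jacobiCoeff_nonneg hσ k s)]
      rw [mul_assoc, ← pow_add]
      have hpow : ‖z‖ ^ (s + (m + s - k)) ≤ r ^ k / r ^ m :=
        (pow_le_pow_left₀ (norm_nonneg z) hz _).trans
          (pow_le_pow_div_pow_of_le_one hr0 hr1 (by omega))
      exact mul_le_mul (jacobiCoeff_le hσ hN k s) hpow (by positivity) (by positivity)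
    · simp only [jacobiCoeff, choose_eq_zero_of_lt (show m < k - s by omega), CharP.cast_eq_zero,
        zero_mul, Complex.ofReal_zero, norm_zero]
      exact mul_nonneg (by positivity) (div_nonneg (pow_nonneg hr0.le k) (pow_nonneg hr0.le m))
  calc ‖phiPoly σ m k z‖ ≤ ∑ s ∈ range (k + 1), 2 ^ m * (s + N).choose N * (r ^ k / r ^ m) :=
        (norm_sum_le _ _).trans (sum_le_sum hterm)
    _ = 2 ^ m * (k + (N + 1)).choose (N + 1) * (r ^ k / r ^ m) := by
        rw [← sum_mul, ← mul_sum, ← Nat.cast_sum, sum_range_add_choose, add_assoc]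

theorem phiConst_le_phiConst_zero {σ : ℝ} {m : ℕ} (hσ : 2 * m + 1 ≤ σ) (k : ℕ) :
    phiConst σ m k ≤ phiConst σ m 0 := by
  set A := (σ - 2 * m - 1) * Real.Gamma (σ - m) / (Real.pi * m !)
  have hA : 0 ≤ A :=
    div_nonneg (mul_nonneg (by linarith) (Real.Gamma_nonneg_of_nonneg (by linarith)))
      (by positivity)
  have hsplit : ∀ j : ℕ, (σ - 2 * m - 1) * j ! * Real.Gamma (σ - m) /
      (Real.pi * m ! * Real.Gamma (σ - 2 * m + j)) = A * (j ! / Real.Gamma (σ - 2 * m + j)) := by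
    intro j
    ring
  have hratio :
      (k ! : ℝ) / Real.Gamma (σ - 2 * m + k) ≤ 0 ! / Real.Gamma (σ - 2 * m + (0 : ℕ)) := by
    rw [div_le_div_iff₀ (Real.Gamma_pos_of_pos (by linarith [k.cast_nonneg (α := ℝ)]))
      (Real.Gamma_pos_of_pos (by push_cast; linarith))]
    simpa using factorial_mul_Gamma_le_Gamma_add_nat (show 1 ≤ σ - 2 * m by linarith) k
  unfold phiConst
  rw [hsplit, hsplit]
  exact Real.sqrt_le_sqrt (mul_le_mul_of_nonneg_left hratio hA)

theorem norm_Phi_le {σ : ℝ} {m N : ℕ} (hσ : 2 * m + 1 ≤ σ) (hN : σ - m ≤ N + 1) (k : ℕ)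
    {r : ℝ} (hr0 : 0 < r) (hr1 : r < 1) {z : ℂ} (hz : ‖z‖ ≤ r) :
    ‖Phi σ m k z‖ ≤
      phiConst σ m 0 * ((1 - r ^ 2) ^ m)⁻¹ *
        (2 ^ m * (k + (N + 1)).choose (N + 1) * (r ^ k / r ^ m)) := by
  have hr2 : 0 < 1 - r ^ 2 := by nlinarith
  have hz2 : 1 - r ^ 2 ≤ 1 - ‖z‖ ^ 2 := by nlinarith [norm_nonneg z]
  have hc0 : 0 ≤ phiConst σ m k := Real.sqrt_nonneg _
  rw [Phi_eq, norm_mul, norm_mul, norm_mul, Complex.norm_real, Complex.norm_real,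
    Real.norm_of_nonneg hc0, norm_pow, norm_neg, norm_one, one_pow, mul_one, zpow_neg,
    zpow_natCast, norm_inv, norm_pow, Real.norm_of_nonneg (by linarith)]
  have hc := phiConst_le_phiConst_zero hσ k
  have hinv : ((1 - ‖z‖ ^ 2) ^ m)⁻¹ ≤ ((1 - r ^ 2) ^ m)⁻¹ := by gcongr
  exact mul_le_mul (mul_le_mul hc hinv (by have := hr2.trans_le hz2; positivity) (hc0.trans hc))
    (norm_phiPoly_le (by linarith) hN k hr0 hr1.le hz) (norm_nonneg _)
    (mul_nonneg (hc0.trans hc) (by positivity))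

theorem continuous_phiPoly (σ : ℝ) (m k : ℕ) : Continuous (phiPoly σ m k) := by
  unfold phiPoly
  fun_prop

theorem continuousOn_Phi (σ : ℝ) (m k : ℕ) : ContinuousOn (Phi σ m k) {z : ℂ | ‖z‖ < 1} := by
  refine ContinuousOn.congr ?_ fun z _ => Phi_eq σ m k z
  have hweight : ContinuousOn (fun z : ℂ => (1 - ‖z‖ ^ 2) ^ (-(m : ℤ))) {z : ℂ | ‖z‖ < 1} :=
    ContinuousOn.zpow₀ (by fun_prop) _ fun z (hz : ‖z‖ < 1) =>
      Or.inl (by nlinarith [norm_nonneg z])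
  exact (continuousOn_const.mul (Complex.continuous_ofReal.comp_continuousOn hweight)).mul
    (continuous_phiPoly σ m k).continuousOn

theorem inv_sqrt_normFactor (σ : ℝ) (m : ℕ) (z : ℂ) :
    (√(normFactor σ m z))⁻¹ = √(Real.pi * (1 - ‖z‖ ^ 2) ^ σ / (σ - 2 * m - 1)) := by
  rw [normFactor, ← Real.sqrt_inv, inv_div]

theorem continuous_inv_sqrt_normFactor {σ : ℝ} (hσ : 0 ≤ σ) (m : ℕ) :
    Continuous fun z => (√(normFactor σ m z))⁻¹ := by
  simp only [inv_sqrt_normFactor]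
  have := Real.continuous_rpow_const hσ
  fun_prop

theorem continuousOn_tsum_Phi_smul {E : Type*} [NormedAddCommGroup E] [NormedSpace ℂ E]
    [CompleteSpace E] {v : ℕ → E} (hv : ∀ k, ‖v k‖ ≤ 1) {σ : ℝ} {m : ℕ} (hσ : 2 * m + 1 ≤ σ) :
    ContinuousOn (fun z => ∑' k, Phi σ m k z • v k) {z : ℂ | ‖z‖ < 1} := by
  intro w hw
  obtain ⟨r, hwr, hr1⟩ := exists_between (show ‖w‖ < 1 from hw)
  have hr0 : 0 < r := (norm_nonneg w).trans_lt hwr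
  obtain ⟨N, hN⟩ := exists_nat_ge σ
  have hdisk : ContinuousOn (fun z => ∑' k, Phi σ m k z • v k) (Metric.closedBall 0 r) := by
    refine continuousOn_tsum
      (fun k => ((continuousOn_Phi σ m k).mono fun z hz => ?_).smul continuousOn_const)
      ((summable_choose_mul_geometric_of_norm_lt_one (N + 1) (r := r) (by
        rwa [Real.norm_of_nonneg hr0.le])).mul_left
          (phiConst σ m 0 * ((1 - r ^ 2) ^ m)⁻¹ * 2 ^ m / r ^ m)) fun k z hz => ?_
    · exact (mem_closedBall_zero_iff.mp hz).trans_lt hr1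
    · rw [norm_smul]
      calc ‖Phi σ m k z‖ * ‖v k‖ ≤ ‖Phi σ m k z‖ := mul_le_of_le_one_right (norm_nonneg _) (hv k)
        _ ≤ _ := norm_Phi_le hσ (by linarith) k hr0 hr1 (mem_closedBall_zero_iff.mp hz)
        _ = _ := by ring
  exact (hdisk.continuousAt (Metric.closedBall_mem_nhds_of_mem (by simpa))).continuousWithinAt

theorem continuity_of_labeling_general {H : Type*} [NormedAddCommGroup H] [InnerProductSpace ℂ H]
    [CompleteSpace H] (ψ : HilbertBasis ℕ ℂ H)
    (σ : ℝ) (m : ℕ) (hm : (m : ℝ) ≤ (σ - 1) / 2) :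
    ContinuousOn (fun z : ℂ => gnbs ψ σ m z) {z : ℂ | ‖z‖ < 1} :=
  (continuous_inv_sqrt_normFactor (by linarith [m.cast_nonneg (α := ℝ)]) m).continuousOn.smul
    (continuousOn_tsum_Phi_smul (fun k => (ψ.orthonormal.1 k).le) (by linarith))

/-- Proposition 4.3: continuity of the labeling `z ↦ |z,σ,m⟩` on the unit disk
(equivalently, `‖|z,σ,m⟩ − |w,σ,m⟩‖ → 0` as `z → w`). -/
theorem continuity_of_labeling {H : Type*} [NormedAddCommGroup H] [InnerProductSpace ℂ H]
    [CompleteSpace H] (ψ : HilbertBasis ℕ ℂ H)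
    (σ : ℝ) (hσ : 1 < σ) (m : ℕ) (hm : (m : ℝ) ≤ (σ - 1) / 2) :
    ContinuousOn (fun z : ℂ => gnbs ψ σ m z) {z : ℂ | ‖z‖ < 1} :=
  continuity_of_labeling_general ψ σ m hm
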